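/- Let a_0, …, a_n and d₁, d₂ be positive integers such that: (1) for any three distinct indices i₁, i₂, i₃, gcd(a_{i₁}, a_{i₂}, a_{i₃}) = 1; (2) for every index i with a_i > 1, a_i divides d₁ or a_i divides d₂; (3) for any two distinct indices i, j with gcd(a_i, a_j) > 1, the number gcd(a_i, a_j) divides both d₁ and d₂; and (4) a_0 + a_1 + … + a_n > d₁ + d₂. Then there is a partition {0, 1, …, n} = S₀ ⊔ S₁ ⊔ S₂ into pairwise disjoint subsets such that ∑_{j ∈ S₁} a_j = d₁, ∑_{j ∈ S₂} a_j = d₂, S₀ is nonempty, and a_j = 1 for every j ∈ S₀. -/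

import Mathlib

/-!
Call `x ≠ y` mergeable if `a x` and `a y` have a common factor, divide the same `dₖ`, and neither
divides the other. Replacing `a x` by `lcm (a x) (a y) ≥ a x + a y` and `a y` by `1` preserves
conditions (1)–(3) and lowers the number of weights `> 1`, and splitting the weights `> 1` of the
new family into two parts of total weight `≤ d₁` and `≤ d₂` gives such a split of the old one.
Without mergeable pairs, the first part consists of the divisors `a i` of `d₁` not dominated by
another divisor `a j` of `d₁` (`a i ∣ a j`, ties broken by the index). As each prime divides at
most two weights, both parts consist of pairwise coprime divisors of `d₁` resp. `d₂`, so the sum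
of each part is at most its product, hence at most `dₖ`. Weights equal to `1` then fill both parts
up to `d₁` and `d₂`, and at least one is left over because `∑ aᵢ > d₁ + d₂`.
-/

open Finset

theorem Nat.two_mul_le_of_dvd_of_ne {x m : ℕ} (hm : 0 < m) (hdvd : x ∣ m) (hne : m ≠ x) :
    2 * x ≤ m := by
  obtain ⟨u, rfl⟩ := hdvd
  rcases u with _ | _ | u
  · omega
  · simp at hne
  · nlinarith

theorem Nat.add_le_lcm_of_not_dvd {x y : ℕ} (hx : 0 < x) (hy : 0 < y) (hxy : ¬ x ∣ y)
    (hyx : ¬ y ∣ x) : x + y ≤ Nat.lcm x y := by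
  have hL := Nat.lcm_pos hx hy
  have h2x := Nat.two_mul_le_of_dvd_of_ne hL (Nat.dvd_lcm_left x y)
    fun h => hyx (h ▸ Nat.dvd_lcm_right x y)
  have h2y := Nat.two_mul_le_of_dvd_of_ne hL (Nat.dvd_lcm_right x y)
    fun h => hxy (h ▸ Nat.dvd_lcm_left x y)
  omega

theorem Finset.sum_le_prod_of_one_lt {ι : Type*} {s : Finset ι} {f : ι → ℕ}
    (hf : ∀ i ∈ s, 1 < f i) : ∑ i ∈ s, f i ≤ ∏ i ∈ s, f i := by
  classical
  induction s using Finset.induction_on with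
  | empty => simp
  | insert j s hj ih =>
    rw [sum_insert hj, prod_insert hj]
    have hfj := hf j (mem_insert_self j s)
    have ih := ih fun i hi => hf i (mem_insert_of_mem hi)
    rcases s.eq_empty_or_nonempty with rfl | ⟨k, hk⟩
    · simp
    · have hprod : 1 < ∏ i ∈ s, f i :=
        (hf k (mem_insert_of_mem hk)).trans_le
          (single_le_prod' (fun i hi => (hf i (mem_insert_of_mem hi)).le) hk)
      calc f j + ∑ i ∈ s, f i ≤ f j + ∏ i ∈ s, f i := by omega
        _ ≤ f j * ∏ i ∈ s, f i := Nat.add_le_mul hfj hprod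

theorem Finset.sum_le_of_pairwise_coprime {ι : Type*} {s : Finset ι} {f : ι → ℕ} {d : ℕ}
    (hd : 0 < d) (hf : ∀ i ∈ s, 1 < f i) (hdvd : ∀ i ∈ s, f i ∣ d)
    (hcop : (s : Set ι).Pairwise (Function.onFun Nat.Coprime f)) : ∑ i ∈ s, f i ≤ d :=
  (sum_le_prod_of_one_lt hf).trans <| Nat.le_of_dvd hd <|
    lcm_eq_prod hcop ▸ Finset.lcm_dvd_iff.mpr hdvd

namespace NefPartition

variable {ι : Type*} {a : ι → ℕ}

def IsMergeable (a : ι → ℕ) (d : ℕ) (x y : ι) : Prop :=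
  ¬ Nat.Coprime (a x) (a y) ∧ a x ∣ d ∧ a y ∣ d ∧ ¬ a x ∣ a y ∧ ¬ a y ∣ a x

namespace IsMergeable

variable {d : ℕ} {x y : ι} (hm : IsMergeable a d x y)
include hm

theorem ne : x ≠ y := by
  rintro rfl
  exact hm.2.2.2.1 dvd_rfl

theorem one_lt_left : 1 < a x := by
  have hx0 : a x ≠ 0 := fun h0 => hm.2.2.2.2 (h0 ▸ dvd_zero _)
  have hx1 : a x ≠ 1 := fun h1 => hm.1 (h1 ▸ Nat.coprime_one_left _)
  omega

theorem one_lt_right : 1 < a y := by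
  have hy0 : a y ≠ 0 := fun h0 => hm.2.2.2.1 (h0 ▸ dvd_zero _)
  have hy1 : a y ≠ 1 := fun h1 => hm.1 (h1 ▸ Nat.coprime_one_right _)
  omega

theorem lcm_dvd : Nat.lcm (a x) (a y) ∣ d :=
  Nat.lcm_dvd hm.2.1 hm.2.2.1

theorem add_le_lcm : a x + a y ≤ Nat.lcm (a x) (a y) :=
  Nat.add_le_lcm_of_not_dvd (by linarith [hm.one_lt_left]) (by linarith [hm.one_lt_right])
    hm.2.2.2.1 hm.2.2.2.2

end IsMergeable

theorem dvd_or_dvd_of_not_isMergeable {d : ℕ} {x y : ι} (hm : ¬ IsMergeable a d x y)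
    (hxy : ¬ Nat.Coprime (a x) (a y)) (hx : a x ∣ d) (hy : a y ∣ d) : a x ∣ a y ∨ a y ∣ a x := by
  unfold IsMergeable at hm
  tauto

def merge [DecidableEq ι] (a : ι → ℕ) (x y : ι) : ι → ℕ :=
  fun i => if i = y then 1 else if i = x then Nat.lcm (a x) (a y) else a i

section Merge

variable [DecidableEq ι] {x y : ι}

theorem merge_self_left (hxy : x ≠ y) : merge a x y x = Nat.lcm (a x) (a y) := by
  simp [merge, hxy]

theorem merge_of_ne {i : ι} (hix : i ≠ x) (hiy : i ≠ y) : merge a x y i = a i := by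
  simp [merge, hix, hiy]

theorem sum_merge_of_notMem {s : Finset ι} (hx : x ∉ s) (hy : y ∉ s) :
    ∑ i ∈ s, merge a x y i = ∑ i ∈ s, a i :=
  sum_congr rfl fun _ hi => merge_of_ne (ne_of_mem_of_not_mem hi hx) (ne_of_mem_of_not_mem hi hy)

theorem sum_insert_le_sum_merge {s : Finset ι} (hxy : x ≠ y) (hx : x ∈ s) (hy : y ∉ s)
    (hlcm : a x + a y ≤ Nat.lcm (a x) (a y)) :
    ∑ i ∈ insert y s, a i ≤ ∑ i ∈ s, merge a x y i := by
  rw [sum_insert hy, ← add_sum_erase s _ hx, ← add_sum_erase s _ hx, merge_self_left hxy,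
    sum_merge_of_notMem (notMem_erase x s) fun h => hy (mem_of_mem_erase h)]
  omega

end Merge

def Dominates [LinearOrder ι] (a : ι → ℕ) (j i : ι) : Prop :=
  a i ∣ a j ∧ toLex (a i, i) < toLex (a j, j)

section Dominates

variable [LinearOrder ι] {i j : ι}

theorem Dominates.ne (h : Dominates a j i) : j ≠ i := by
  rintro rfl
  exact lt_irrefl _ h.2

theorem Dominates.not_dominates (h : Dominates a j i) : ¬ Dominates a i j :=
  fun h' => lt_asymm h.2 h'.2

theorem dominates_or_dominates_of_dvd (hij : i ≠ j) (hj : 0 < a j) (h : a i ∣ a j) :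
    Dominates a j i ∨ Dominates a i j := by
  rcases lt_trichotomy (toLex (a i, i)) (toLex (a j, j)) with hlt | heq | hgt
  · exact Or.inl ⟨h, hlt⟩
  · exact absurd (congrArg Prod.snd (toLex.injective heq)) hij
  · have hle := Nat.le_of_dvd hj h
    have heq : a j = a i := by
      rw [Prod.Lex.toLex_lt_toLex] at hgt
      omega
    exact Or.inr ⟨heq ▸ dvd_rfl, hgt⟩

end Dominates

variable [Fintype ι]

def bigIndices (a : ι → ℕ) : Finset ι := {i | 1 < a i}

theorem mem_bigIndices {i : ι} : i ∈ bigIndices a ↔ 1 < a i := by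
  simp [bigIndices]

/-- Conditions (1)–(3), with (1) in the form "every prime divides at most two of the `a i`". -/
structure Admissible (a : ι → ℕ) (d₁ d₂ : ℕ) : Prop where
  pos : ∀ i, 0 < a i
  card_prime_dvd_le_two : ∀ p, p.Prime → #{i | p ∣ a i} ≤ 2
  dvd_or_dvd : ∀ i, 1 < a i → a i ∣ d₁ ∨ a i ∣ d₂
  gcd_dvd_gcd : ∀ i j, i ≠ j → Nat.gcd (a i) (a j) ∣ Nat.gcd d₁ d₂

def HasSplit [DecidableEq ι] (a : ι → ℕ) (d₁ d₂ : ℕ) : Prop :=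
  ∃ T ⊆ bigIndices a, ∑ i ∈ T, a i ≤ d₁ ∧ ∑ i ∈ bigIndices a \ T, a i ≤ d₂

variable {d₁ d₂ : ℕ}

theorem Admissible.of_gcd (hpos : ∀ i, 0 < a i)
    (h1 : ∀ i j k : ι, i ≠ j → i ≠ k → j ≠ k → Nat.gcd (Nat.gcd (a i) (a j)) (a k) = 1)
    (h2 : ∀ i, 1 < a i → a i ∣ d₁ ∨ a i ∣ d₂)
    (h3 : ∀ i j : ι, i ≠ j → 1 < Nat.gcd (a i) (a j) →
      Nat.gcd (a i) (a j) ∣ d₁ ∧ Nat.gcd (a i) (a j) ∣ d₂) :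
    Admissible a d₁ d₂ where
  pos := hpos
  card_prime_dvd_le_two p hp := by
    by_contra hcard
    obtain ⟨i, hi, j, hj, k, hk, hij, hik, hjk⟩ := two_lt_card.mp (not_le.mp hcard)
    simp only [mem_filter, mem_univ, true_and] at hi hj hk
    have hp1 := h1 i j k hij hik hjk ▸ Nat.dvd_gcd (Nat.dvd_gcd hi hj) hk
    exact hp.ne_one (Nat.dvd_one.mp hp1)
  dvd_or_dvd := h2
  gcd_dvd_gcd i j hij := by
    by_cases hg : 1 < Nat.gcd (a i) (a j)
    · exact Nat.dvd_gcd (h3 i j hij hg).1 (h3 i j hij hg).2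
    · have := Nat.gcd_pos_of_pos_left (a j) (hpos i)
      rw [show Nat.gcd (a i) (a j) = 1 by omega]
      exact one_dvd _

namespace Admissible

variable (h : Admissible a d₁ d₂)
include h

theorem gcd_dvd_left {i j : ι} (hij : i ≠ j) : Nat.gcd (a i) (a j) ∣ d₁ :=
  (h.gcd_dvd_gcd i j hij).trans (Nat.gcd_dvd_left _ _)

theorem gcd_dvd_right {i j : ι} (hij : i ≠ j) : Nat.gcd (a i) (a j) ∣ d₂ :=
  (h.gcd_dvd_gcd i j hij).trans (Nat.gcd_dvd_right _ _)

theorem eq_of_prime_dvd [DecidableEq ι] {p : ℕ} (hp : p.Prime) {i j k : ι} (hij : i ≠ j)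
    (hik : i ≠ k) (hi : p ∣ a i) (hj : p ∣ a j) (hk : p ∣ a k) : j = k := by
  by_contra hjk
  have hsub : {i, j, k} ⊆ ({i | p ∣ a i} : Finset ι) := by
    intro l hl
    simp only [mem_insert, mem_singleton] at hl
    rcases hl with rfl | rfl | rfl <;> simpa
  have := (card_le_card hsub).trans (h.card_prime_dvd_le_two p hp)
  rw [card_eq_three.mpr ⟨i, j, k, hij, hik, hjk, rfl⟩] at this
  omega

theorem coprime_gcd_gcd [DecidableEq ι] {i j k : ι} (hij : i ≠ j) (hik : i ≠ k) (hjk : j ≠ k) :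
    Nat.Coprime (Nat.gcd (a i) (a k)) (Nat.gcd (a j) (a k)) :=
  Nat.coprime_of_dvd fun _ hp hpi hpj =>
    hij <| h.eq_of_prime_dvd hp hik.symm hjk.symm (hpi.trans (Nat.gcd_dvd_right _ _))
      (hpi.trans (Nat.gcd_dvd_left _ _)) (hpj.trans (Nat.gcd_dvd_left _ _))

theorem merge [DecidableEq ι] {x y : ι} (hxy : x ≠ y)
    (hd : Nat.lcm (a x) (a y) ∣ d₁ ∨ Nat.lcm (a x) (a y) ∣ d₂) :
    Admissible (merge a x y) d₁ d₂ where
  pos i := by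
    unfold NefPartition.merge
    split_ifs
    · exact one_pos
    · exact Nat.lcm_pos (h.pos x) (h.pos y)
    · exact h.pos i
  card_prime_dvd_le_two p hp := by
    -- each `i` with `p ∣ merge a x y i` is the image under `y ↦ x` of an index with `p ∣ a i`
    refine (card_le_card (t := ({i | p ∣ a i} : Finset ι).image
      fun i => if i = y then x else i) ?_).trans
        (card_image_le.trans (h.card_prime_dvd_le_two p hp))
    intro i hi
    simp only [mem_filter, mem_univ, true_and, mem_image] at hi ⊢
    unfold NefPartition.merge at hi
    split_ifs at hi with hiy hix
    · exact absurd (Nat.dvd_one.mp hi) hp.ne_one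
    · rcases hp.dvd_lcm.mp hi with hpx | hpy
      · exact ⟨x, hpx, by simp [hxy, hix]⟩
      · exact ⟨y, hpy, by simp [hix]⟩
    · exact ⟨i, hi, by simp [hiy]⟩
  dvd_or_dvd i hi := by
    unfold NefPartition.merge at hi ⊢
    split_ifs at hi ⊢
    · omega
    · exact hd
    · exact h.dvd_or_dvd i hi
  gcd_dvd_gcd i j hij := by
    -- `gcd (a x) (a c)` and `gcd (a y) (a c)` are coprime since no prime divides all three weights
    have hlcm : ∀ c, c ≠ x → c ≠ y → Nat.gcd (Nat.lcm (a x) (a y)) (a c) ∣ Nat.gcd d₁ d₂ :=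
      fun c hcx hcy => (Nat.gcd_dvd_gcd_of_dvd_left _ (Nat.lcm_dvd_mul _ _)).trans <|
        (Nat.gcd_mul_left_dvd_mul_gcd _ _ _).trans <|
          (h.coprime_gcd_gcd hxy hcx.symm hcy.symm).mul_dvd_of_dvd_of_dvd
            (h.gcd_dvd_gcd x c hcx.symm) (h.gcd_dvd_gcd y c hcy.symm)
    rcases eq_or_ne i y with rfl | hiy
    · simp [NefPartition.merge]
    rcases eq_or_ne j y with rfl | hjy
    · simp [NefPartition.merge]
    rcases eq_or_ne i x with rfl | hix
    · rw [merge_self_left hxy, merge_of_ne hij.symm hjy]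
      exact hlcm j hij.symm hjy
    rcases eq_or_ne j x with rfl | hjx
    · rw [merge_self_left hxy, merge_of_ne hix hiy, Nat.gcd_comm]
      exact hlcm i hix hiy
    rw [merge_of_ne hix hiy, merge_of_ne hjx hjy]
    exact h.gcd_dvd_gcd i j hij

end Admissible

theorem bigIndices_merge [DecidableEq ι] {d : ℕ} {x y : ι} (hm : IsMergeable a d x y) :
    bigIndices (merge a x y) = (bigIndices a).erase y := by
  have hlcm : 1 < Nat.lcm (a x) (a y) := by linarith [hm.add_le_lcm, hm.one_lt_left]
  ext i
  simp only [mem_bigIndices, mem_erase, merge]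
  split_ifs with hiy hix
  · simp [hiy]
  · simp [hix, hm.ne, hm.one_lt_left, hlcm]
  · simp [hiy]

theorem HasSplit.of_merge [DecidableEq ι] {d : ℕ} {x y : ι} (hm : IsMergeable a d x y)
    (h : HasSplit (merge a x y) d₁ d₂) : HasSplit a d₁ d₂ := by
  obtain ⟨T, hT, h₁, h₂⟩ := h
  rw [bigIndices_merge hm] at hT h₂
  have hx : x ∈ (bigIndices a).erase y := mem_erase.mpr ⟨hm.ne, mem_bigIndices.mpr hm.one_lt_left⟩
  have hy : y ∈ bigIndices a := mem_bigIndices.mpr hm.one_lt_right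
  have hyT : y ∉ T := fun hyT => by simpa using hT hyT
  by_cases hxT : x ∈ T
  · refine ⟨insert y T, insert_subset hy (hT.trans (erase_subset _ _)),
      (sum_insert_le_sum_merge hm.ne hxT hyT hm.add_le_lcm).trans h₁, ?_⟩
    have hcompl : bigIndices a \ insert y T = (bigIndices a).erase y \ T := by
      ext i
      simp only [mem_sdiff, mem_insert, mem_erase]
      tauto
    rwa [hcompl, ← sum_merge_of_notMem (fun h => (mem_sdiff.mp h).2 hxT)
      fun h => (mem_sdiff.mp h).1 |> notMem_erase y _]
  · refine ⟨T, hT.trans (erase_subset _ _), (sum_merge_of_notMem hxT hyT).symm.trans_le h₁, ?_⟩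
    have hcompl : bigIndices a \ T = insert y ((bigIndices a).erase y \ T) := by
      ext i
      simp only [mem_sdiff, mem_insert, mem_erase]
      by_cases hi : i = y <;> simp_all
    rw [hcompl]
    exact (sum_insert_le_sum_merge hm.ne (mem_sdiff.mpr ⟨hx, hxT⟩)
      (fun h => notMem_erase y _ (mem_sdiff.mp h).1) hm.add_le_lcm).trans h₂

theorem Admissible.eq_of_dominates [LinearOrder ι] (h : Admissible a d₁ d₂) {p : ℕ}
    (hp : p.Prime) {i j k : ι} (hij : i ≠ j) (hi : p ∣ a i) (hj : p ∣ a j)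
    (hk : Dominates a k i) : k = j :=
  h.eq_of_prime_dvd hp hk.ne.symm hij hi (hi.trans hk.1) hj

theorem Admissible.hasSplit_of_forall_not_isMergeable [LinearOrder ι] (h : Admissible a d₁ d₂)
    (hd₁ : 0 < d₁) (hd₂ : 0 < d₂)
    (hm : ∀ x y, ¬ IsMergeable a d₁ x y ∧ ¬ IsMergeable a d₂ x y) : HasSplit a d₁ d₂ := by
  classical
  set B := bigIndices a
  set T := {i ∈ B | a i ∣ d₁ ∧ ∀ j, a j ∣ d₁ → ¬ Dominates a j i}
  have hB : ∀ i ∈ B, 1 < a i := fun i hi => mem_bigIndices.mp hi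
  have hdom : ∀ i ∈ B \ T, a i ∣ d₁ → ∃ j, a j ∣ d₁ ∧ Dominates a j i := by
    intro i hi hid
    simp only [T, mem_sdiff, mem_filter, not_and, not_forall, not_not] at hi
    simpa using hi.2 hi.1 hid
  have hdvd₂ : ∀ i ∈ B \ T, a i ∣ d₂ := by
    intro i hi
    by_cases hid : a i ∣ d₁
    · obtain ⟨j, -, hji⟩ := hdom i hi hid
      exact Nat.gcd_eq_left hji.1 ▸ h.gcd_dvd_right hji.ne.symm
    · exact (h.dvd_or_dvd i (hB i (mem_sdiff.mp hi).1)).resolve_left hid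
  have hcop₁ : (T : Set ι).Pairwise (Function.onFun Nat.Coprime a) := by
    intro i hi j hj hij
    by_contra hc
    obtain ⟨-, hid, hiu⟩ := mem_filter.mp hi
    obtain ⟨-, hjd, hju⟩ := mem_filter.mp hj
    rcases dvd_or_dvd_of_not_isMergeable (hm i j).1 hc hid hjd with hdvd | hdvd
    · rcases dominates_or_dominates_of_dvd hij (h.pos j) hdvd with hji | hij'
      exacts [hiu j hjd hji, hju i hid hij']
    · rcases dominates_or_dominates_of_dvd hij.symm (h.pos i) hdvd with hij' | hji
      exacts [hju i hid hij', hiu j hjd hji]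
  -- two dominated weights `a i ∣ a j` would have to dominate each other: a prime factor of `a i`
  -- divides `a j` and both dominating weights, and divides at most two weights
  have hndvd : ∀ i ∈ B \ T, ∀ j ∈ B \ T, i ≠ j → ¬ a i ∣ a j := by
    intro i hi j hj hij hdvd
    obtain ⟨p, hp, hpi⟩ := Nat.exists_prime_and_dvd (hB i (mem_sdiff.mp hi).1).ne'
    obtain ⟨k, hkd, hki⟩ := hdom i hi (Nat.gcd_eq_left hdvd ▸ h.gcd_dvd_left hij)
    obtain rfl := h.eq_of_dominates hp hij hpi (hpi.trans hdvd) hki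
    obtain ⟨m, -, hmk⟩ := hdom k hj hkd
    obtain rfl := h.eq_of_dominates hp hij.symm (hpi.trans hdvd) hpi hmk
    exact hki.not_dominates hmk
  have hcop₂ : ((B \ T : Finset ι) : Set ι).Pairwise (Function.onFun Nat.Coprime a) := by
    intro i hi j hj hij
    by_contra hc
    rcases dvd_or_dvd_of_not_isMergeable (hm i j).2 hc (hdvd₂ i hi) (hdvd₂ j hj) with hdvd | hdvd
    exacts [hndvd i hi j hj hij hdvd, hndvd j hj i hi hij.symm hdvd]
  exact ⟨T, filter_subset _ _,
    sum_le_of_pairwise_coprime hd₁ (fun i hi => hB i (mem_filter.mp hi).1)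
      (fun i hi => (mem_filter.mp hi).2.1) hcop₁,
    sum_le_of_pairwise_coprime hd₂ (fun i hi => hB i (mem_sdiff.mp hi).1) hdvd₂ hcop₂⟩

theorem Admissible.hasSplit [LinearOrder ι] (h : Admissible a d₁ d₂) (hd₁ : 0 < d₁)
    (hd₂ : 0 < d₂) : HasSplit a d₁ d₂ := by
  induction hN : #(bigIndices a) using Nat.strong_induction_on generalizing a with
  | _ N ih =>
    by_cases hex : ∃ x y, IsMergeable a d₁ x y ∨ IsMergeable a d₂ x y
    · obtain ⟨x, y, hxy⟩ := hex
      obtain ⟨d, hm, hlcm⟩ : ∃ d, IsMergeable a d x y ∧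
          (Nat.lcm (a x) (a y) ∣ d₁ ∨ Nat.lcm (a x) (a y) ∣ d₂) :=
        hxy.elim (fun hm => ⟨d₁, hm, .inl hm.lcm_dvd⟩) (fun hm => ⟨d₂, hm, .inr hm.lcm_dvd⟩)
      have hy : y ∈ bigIndices a := mem_bigIndices.mpr hm.one_lt_right
      have hcard : #(bigIndices (NefPartition.merge a x y)) < N := by
        rw [bigIndices_merge hm, card_erase_of_mem hy, ← hN]
        exact Nat.sub_lt (card_pos.mpr ⟨y, hy⟩) one_pos
      exact (ih _ hcard (h.merge hm.ne hlcm) rfl).of_merge hm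
    · simp only [not_exists, not_or] at hex
      exact h.hasSplit_of_forall_not_isMergeable hd₁ hd₂ hex

theorem HasSplit.exists_disjoint_sum_eq [DecidableEq ι] (hpos : ∀ i, 0 < a i)
    (hsplit : HasSplit a d₁ d₂) (hsum : d₁ + d₂ < ∑ i, a i) :
    ∃ S₁ S₂ : Finset ι, Disjoint S₁ S₂ ∧ bigIndices a ⊆ S₁ ∪ S₂ ∧
      ∑ i ∈ S₁, a i = d₁ ∧ ∑ i ∈ S₂, a i = d₂ := by
  obtain ⟨T, hT, h₁, h₂⟩ := hsplit
  set B := bigIndices a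
  set O := univ \ B
  have hsumO : ∀ s ⊆ O, ∑ i ∈ s, a i = #s := fun s hs => by
    rw [card_eq_sum_ones]
    refine sum_congr rfl fun i hi => ?_
    have := hpos i
    have := mem_bigIndices.not.mp (mem_sdiff.mp (hs hi)).2
    omega
  have htotal : ∑ i, a i = ∑ i ∈ T, a i + ∑ i ∈ B \ T, a i + #O := by
    rw [← sum_sdiff (subset_univ B), ← sum_sdiff hT, hsumO O subset_rfl]
    ring
  obtain ⟨O₁, hO₁, hcard₁⟩ := exists_subset_card_eq (s := O) (n := d₁ - ∑ i ∈ T, a i) (by omega)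
  obtain ⟨O₂, hO₂, hcard₂⟩ := exists_subset_card_eq (s := O \ O₁)
    (n := d₂ - ∑ i ∈ B \ T, a i) (by rw [card_sdiff_of_subset hO₁]; omega)
  have hO₂O : O₂ ⊆ O := hO₂.trans sdiff_subset
  have hBO : Disjoint B O := disjoint_sdiff
  refine ⟨T ∪ O₁, (B \ T) ∪ O₂, ?_, ?_, ?_, ?_⟩
  · simp only [disjoint_union_left, disjoint_union_right]
    exact ⟨⟨disjoint_sdiff, ((hBO.mono_left sdiff_subset).mono_right hO₁).symm⟩,
      (hBO.mono_left hT).mono_right hO₂O, disjoint_sdiff.mono_right hO₂⟩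
  · intro i hi
    by_cases hiT : i ∈ T <;> simp [hiT, hi]
  · rw [sum_union ((hBO.mono_left hT).mono_right hO₁), hsumO O₁ hO₁, hcard₁]
    omega
  · rw [sum_union ((hBO.mono_left sdiff_subset).mono_right hO₂O), hsumO O₂ hO₂O, hcard₂]
    omega

theorem exists_partition_of_disjoint_sum_eq [DecidableEq ι] (hpos : ∀ i, 0 < a i)
    {S₁ S₂ : Finset ι} (hdisj : Disjoint S₁ S₂) (hcover : bigIndices a ⊆ S₁ ∪ S₂)
    (h₁ : ∑ i ∈ S₁, a i = d₁) (h₂ : ∑ i ∈ S₂, a i = d₂) (hsum : d₁ + d₂ < ∑ i, a i) :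
    ∃ S₀ S₁ S₂ : Finset ι,
      Disjoint S₀ S₁ ∧ Disjoint S₀ S₂ ∧ Disjoint S₁ S₂ ∧ S₀ ∪ S₁ ∪ S₂ = univ ∧
      (∑ j ∈ S₁, a j) = d₁ ∧ (∑ j ∈ S₂, a j) = d₂ ∧ S₀.Nonempty ∧ ∀ j ∈ S₀, a j = 1 := by
  refine ⟨univ \ (S₁ ∪ S₂), S₁, S₂, sdiff_disjoint.mono_right subset_union_left,
    sdiff_disjoint.mono_right subset_union_right, hdisj, ?_, h₁, h₂, ?_, ?_⟩
  · rw [union_assoc, sdiff_union_of_subset (subset_univ _)]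
  · rw [nonempty_iff_ne_empty]
    intro h₀
    have := sum_sdiff (subset_univ (S₁ ∪ S₂)) (f := a)
    rw [h₀, sum_empty, sum_union hdisj] at this
    omega
  · intro j hj
    have := hpos j
    have := mem_bigIndices.not.mp fun hB => (mem_sdiff.mp hj).2 (hcover hB)
    omega

end NefPartition

/-- arithmetic core of the main theorem. Given positive integers
`a₀, …, aₙ, d₁, d₂` with (1) any three of the `aᵢ` coprime, (2) every `aᵢ > 1`
dividing `d₁` or `d₂`, (3) `gcd(aᵢ, aⱼ) > 1` dividing both `d₁` and `d₂`, and
(4) `Σ aᵢ > d₁ + d₂`, there is a nice nef partition `S₀ ⊔ S₁ ⊔ S₂`. -/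
theorem stmt10 (n : ℕ) (a : Fin (n + 1) → ℕ) (d₁ d₂ : ℕ)
    (hapos : ∀ i, 0 < a i) (hd₁ : 0 < d₁) (hd₂ : 0 < d₂)
    (h1 : ∀ i j k : Fin (n + 1), i ≠ j → i ≠ k → j ≠ k →
      Nat.gcd (Nat.gcd (a i) (a j)) (a k) = 1)
    (h2 : ∀ i, 1 < a i → a i ∣ d₁ ∨ a i ∣ d₂)
    (h3 : ∀ i j : Fin (n + 1), i ≠ j → 1 < Nat.gcd (a i) (a j) →
      Nat.gcd (a i) (a j) ∣ d₁ ∧ Nat.gcd (a i) (a j) ∣ d₂)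
    (h4 : d₁ + d₂ < ∑ i, a i) :
    ∃ S₀ S₁ S₂ : Finset (Fin (n + 1)),
      Disjoint S₀ S₁ ∧ Disjoint S₀ S₂ ∧ Disjoint S₁ S₂ ∧
      S₀ ∪ S₁ ∪ S₂ = Finset.univ ∧
      (∑ j ∈ S₁, a j) = d₁ ∧ (∑ j ∈ S₂, a j) = d₂ ∧
      S₀.Nonempty ∧ ∀ j ∈ S₀, a j = 1 := by
  have h : NefPartition.Admissible a d₁ d₂ := .of_gcd hapos h1 h2 h3
  obtain ⟨S₁, S₂, hdisj, hcover, h₁, h₂⟩ := (h.hasSplit hd₁ hd₂).exists_disjoint_sum_eq hapos h4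
  exact NefPartition.exists_partition_of_disjoint_sum_eq hapos hdisj hcover h₁ h₂ h4
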